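/- Let f : S² → ℝ be continuous with f(m) > 0 for all m and ∫_{S²} f dσ = 1, and set Q = ∫_{S²} (m mᵀ − I/3) f(m) dσ(m). Then Q is a real symmetric traceless 3×3 matrix and every eigenvalue of Q lies in the open interval (−1/3, 2/3), i.e. Q ∈ 𝒬_phys. More generally, for any probability measure μ on S², every eigenvalue of ∫_{S²} (m mᵀ − I/3) dμ(m) lies in the closed interval [−1/3, 2/3]. -/

import Mathlib

/-! For a unit vector `m` and any `v`, `vᵀ (m mᵀ - I/n) v = ⟪v, m⟫² - ‖v‖²/n` with
`0 ≤ ⟪v, m⟫² ≤ ‖v‖²` (Cauchy–Schwarz). Integrating against a probability measure and taking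
`v` an eigenvector puts every eigenvalue in `[-1/n, 1 - 1/n]`. The two extreme cases force
`⟪v, m⟫ = 0`, resp. `m ∈ ℝ v`, almost surely, i.e. the measure lives on a proper subspace; a
measure absolutely continuous with respect to surface measure charges no proper subspace, so
for it (and `n ≥ 2`) the bounds are strict. The density `f` gives such a measure `f σ`. -/

open Matrix MeasureTheory Metric

noncomputable section

/-- The uniform (rotation-invariant) probability measure on the unit sphere S² ⊆ ℝ³. -/
def sphereSigma : Measure (sphere (0 : EuclideanSpace ℝ (Fin 3)) 1) :=
  (((volume : Measure (EuclideanSpace ℝ (Fin 3))).toSphere) Set.univ)⁻¹ •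
    ((volume : Measure (EuclideanSpace ℝ (Fin 3))).toSphere)

open scoped RealInnerProductSpace

theorem integral_pos_of_ae_pos {X : Type*} [MeasurableSpace X] {ν : Measure X} [NeZero ν]
    {g : X → ℝ} (hgi : Integrable g ν) (hg : ∀ᵐ x ∂ν, 0 < g x) : 0 < ∫ x, g x ∂ν := by
  rw [integral_pos_iff_support_of_nonneg_ae (hg.mono fun _ => le_of_lt) hgi]
  refine measure_pos_of_superset (fun x (hx : 0 < g x) => hx.ne') ?_
  rw [measure_of_measure_compl_eq_zero (ae_iff.mp hg)]
  exact Measure.measure_univ_ne_zero.mpr (NeZero.ne ν)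

theorem Continuous.integrable_of_compactSpace {X : Type*} [TopologicalSpace X] [CompactSpace X]
    [MeasurableSpace X] [OpensMeasurableSpace X] {ν : Measure X} [IsFiniteMeasure ν]
    {g : X → ℝ} (hg : Continuous g) : Integrable g ν :=
  hg.integrable_of_hasCompactSupport (.of_compactSpace g)

section Sphere

variable {E : Type*} [NormedAddCommGroup E] [InnerProductSpace ℝ E]

theorem inner_sq_le_norm_sq (w : E) (m : sphere (0 : E) 1) : ⟪w, (m : E)⟫ ^ 2 ≤ ‖w‖ ^ 2 := by
  have := abs_real_inner_le_norm w m
  rw [norm_eq_of_mem_sphere, mul_one] at this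
  exact sq_le_sq' (abs_le.mp this).1 (abs_le.mp this).2

theorem mem_span_singleton_of_inner_sq_eq_norm_sq {w : E} (hw : w ≠ 0) {m : sphere (0 : E) 1}
    (h : ⟪w, (m : E)⟫ ^ 2 = ‖w‖ ^ 2) : (m : E) ∈ ℝ ∙ w := by
  have hnorm : ‖⟪w, (m : E)⟫‖ = ‖w‖ * ‖(m : E)‖ := by
    rw [norm_eq_of_mem_sphere, mul_one, Real.norm_eq_abs, ← abs_norm]
    exact (sq_eq_sq_iff_abs_eq_abs _ _).mp h
  obtain ⟨r, -, hr⟩ := (norm_inner_eq_norm_iff hw (ne_zero_of_mem_unit_sphere m)).mp hnorm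
  exact hr ▸ Submodule.smul_mem _ r (Submodule.mem_span_singleton_self w)

variable [FiniteDimensional ℝ E] [MeasurableSpace E] [BorelSpace E]

open scoped Pointwise in
theorem MeasureTheory.Measure.toSphere_preimage_submodule_eq_zero (μ : Measure E)
    [μ.IsAddHaarMeasure] {p : Submodule ℝ E} (hp : p ≠ ⊤) :
    μ.toSphere (Subtype.val ⁻¹' (p : Set E)) = 0 := by
  have hcone : Set.Ioo (0 : ℝ) 1 •
      (Subtype.val '' (Subtype.val ⁻¹' (p : Set E) : Set (sphere (0 : E) 1))) ⊆ p := by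
    rintro _ ⟨r, -, _, ⟨m, hm, rfl⟩, rfl⟩
    exact p.smul_mem r hm
  have hmeas : MeasurableSet (Subtype.val ⁻¹' (p : Set E) : Set (sphere (0 : E) 1)) :=
    (p.closed_of_finiteDimensional.preimage continuous_subtype_val).measurableSet
  rw [μ.toSphere_apply' hmeas, measure_mono_null hcone (Measure.addHaar_submodule μ p hp),
    mul_zero]

variable {ν : Measure (sphere (0 : E) 1)}

theorem ae_notMem_submodule_of_absolutelyContinuous_toSphere (μ : Measure E)
    [μ.IsAddHaarMeasure] (hν : ν ≪ μ.toSphere) {p : Submodule ℝ E} (hp : p ≠ ⊤) :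
    ∀ᵐ m : sphere (0 : E) 1 ∂ν, (m : E) ∉ p :=
  measure_eq_zero_iff_ae_notMem.mp (hν (μ.toSphere_preimage_submodule_eq_zero hp))

variable [IsProbabilityMeasure ν]

theorem integral_inner_sq_le_norm_sq (w : E) :
    ∫ m : sphere (0 : E) 1, ⟪w, (m : E)⟫ ^ 2 ∂ν ≤ ‖w‖ ^ 2 := by
  refine (integral_mono (by fun_prop : Continuous _).integrable_of_compactSpace
    (integrable_const (‖w‖ ^ 2)) (inner_sq_le_norm_sq w)).trans_eq ?_
  simp

theorem integral_inner_sq_pos (μ : Measure E) [μ.IsAddHaarMeasure] (hν : ν ≪ μ.toSphere) {w : E}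
    (hw : w ≠ 0) : 0 < ∫ m : sphere (0 : E) 1, ⟪w, (m : E)⟫ ^ 2 ∂ν := by
  have hp : (ℝ ∙ w)ᗮ ≠ ⊤ := by
    rwa [ne_eq, Submodule.orthogonal_eq_top_iff, Submodule.span_singleton_eq_bot]
  refine integral_pos_of_ae_pos (by fun_prop : Continuous _).integrable_of_compactSpace
    ((ae_notMem_submodule_of_absolutelyContinuous_toSphere μ hν hp).mono fun m hm => ?_)
  rw [Submodule.mem_orthogonal_singleton_iff_inner_right] at hm
  positivity

theorem integral_inner_sq_lt_norm_sq (μ : Measure E) [μ.IsAddHaarMeasure] (hν : ν ≪ μ.toSphere)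
    (hE : 1 < Module.finrank ℝ E) {w : E} (hw : w ≠ 0) :
    ∫ m : sphere (0 : E) 1, ⟪w, (m : E)⟫ ^ 2 ∂ν < ‖w‖ ^ 2 := by
  have hp : ℝ ∙ w ≠ ⊤ := by
    intro htop
    have := finrank_span_singleton (K := ℝ) hw
    rw [htop, finrank_top] at this
    omega
  have hpos : 0 < ∫ m : sphere (0 : E) 1, (‖w‖ ^ 2 - ⟪w, (m : E)⟫ ^ 2) ∂ν :=
    integral_pos_of_ae_pos (by fun_prop : Continuous _).integrable_of_compactSpace
      ((ae_notMem_submodule_of_absolutelyContinuous_toSphere μ hν hp).mono fun m hm =>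
        sub_pos.mpr <| (inner_sq_le_norm_sq w m).lt_of_ne
          fun h => hm (mem_span_singleton_of_inner_sq_eq_norm_sq hw h))
  rwa [integral_sub (integrable_const _) (by fun_prop : Continuous _).integrable_of_compactSpace,
    integral_const, probReal_univ, one_smul, sub_pos] at hpos

end Sphere

section Matrix

variable {ι : Type*} [Fintype ι]

theorem dotProduct_of_integral_mulVec {X : Type*} [MeasurableSpace X] {μ : Measure X}
    {F : X → Matrix ι ι ℝ} (hF : ∀ i j, Integrable (fun x => F x i j) μ) (v : ι → ℝ) :
    v ⬝ᵥ (of fun i j => ∫ x, F x i j ∂μ) *ᵥ v = ∫ x, v ⬝ᵥ F x *ᵥ v ∂μ := by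
  have hrow : ∀ i, Integrable (fun x => v i * ∑ j, F x i j * v j) μ := fun i =>
    (integrable_finsetSum _ fun j _ => (hF i j).mul_const _).const_mul _
  simp only [dotProduct, mulVec, of_apply]
  rw [integral_finsetSum _ fun i _ => hrow i]
  refine Finset.sum_congr rfl fun i _ => ?_
  rw [integral_const_mul, integral_finsetSum _ fun j _ => (hF i j).mul_const _]
  simp only [integral_mul_const]

theorem dotProduct_vecMulVec_sub_smul_one_mulVec [DecidableEq ι] (x v : ι → ℝ) (c : ℝ) :
    v ⬝ᵥ (vecMulVec x x - c • 1) *ᵥ v = (x ⬝ᵥ v) ^ 2 - c * (v ⬝ᵥ v) := by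
  rw [sub_mulVec, vecMulVec_mulVec, smul_mulVec, one_mulVec, dotProduct_sub, dotProduct_smul,
    dotProduct_smul]
  simp [dotProduct_comm v x, sq]

theorem exists_dotProduct_mulVec_eq_of_mem_spectrum [DecidableEq ι] {A : Matrix ι ι ℝ} {l : ℝ}
    (hl : l ∈ spectrum ℝ A) : ∃ v ≠ 0, v ⬝ᵥ A *ᵥ v = l * (v ⬝ᵥ v) := by
  rw [← spectrum_toLin', ← Module.End.hasEigenvalue_iff_mem_spectrum] at hl
  obtain ⟨v, hv, hv0⟩ := hl.exists_hasEigenvector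
  refine ⟨v, hv0, ?_⟩
  rw [← toLin'_apply, Module.End.mem_eigenspace_iff.mp hv, dotProduct_smul, smul_eq_mul]

theorem spectrum_subset_Icc_of_dotProduct_mulVec [DecidableEq ι] {A : Matrix ι ι ℝ} {a b : ℝ}
    (h : ∀ v, a * (v ⬝ᵥ v) ≤ v ⬝ᵥ A *ᵥ v ∧ v ⬝ᵥ A *ᵥ v ≤ b * (v ⬝ᵥ v)) :
    spectrum ℝ A ⊆ Set.Icc a b := by
  intro l hl
  obtain ⟨v, hv, hvl⟩ := exists_dotProduct_mulVec_eq_of_mem_spectrum hl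
  have hvv : 0 < v ⬝ᵥ v := by simpa using dotProduct_self_star_pos_iff.mpr hv
  obtain ⟨ha, hb⟩ := h v
  rw [hvl] at ha hb
  exact ⟨le_of_mul_le_mul_right ha hvv, le_of_mul_le_mul_right hb hvv⟩

theorem spectrum_subset_Ioo_of_dotProduct_mulVec [DecidableEq ι] {A : Matrix ι ι ℝ} {a b : ℝ}
    (h : ∀ v ≠ 0, a * (v ⬝ᵥ v) < v ⬝ᵥ A *ᵥ v ∧ v ⬝ᵥ A *ᵥ v < b * (v ⬝ᵥ v)) :
    spectrum ℝ A ⊆ Set.Ioo a b := by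
  intro l hl
  obtain ⟨v, hv, hvl⟩ := exists_dotProduct_mulVec_eq_of_mem_spectrum hl
  have hvv : 0 < v ⬝ᵥ v := by simpa using dotProduct_self_star_pos_iff.mpr hv
  obtain ⟨ha, hb⟩ := h v hv
  rw [hvl] at ha hb
  exact ⟨lt_of_mul_lt_mul_right ha hvv.le, lt_of_mul_lt_mul_right hb hvv.le⟩

end Matrix

section SecondMoment

variable {ι : Type*} [Fintype ι]

theorem sum_sq_apply_of_mem_sphere (m : sphere (0 : EuclideanSpace ℝ ι) 1) :
    ∑ i, (m : EuclideanSpace ℝ ι) i ^ 2 = 1 := by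
  rw [← EuclideanSpace.real_norm_sq_eq, norm_eq_of_mem_sphere, one_pow]

theorem norm_toLp_sq (v : ι → ℝ) : ‖WithLp.toLp 2 v‖ ^ 2 = v ⬝ᵥ v := by
  rw [← real_inner_self_eq_norm_sq]
  rfl

variable [DecidableEq ι]

def secondMoment (μ : Measure (sphere (0 : EuclideanSpace ℝ ι) 1)) : Matrix ι ι ℝ :=
  of fun i j => ∫ m, ((m : EuclideanSpace ℝ ι) i * (m : EuclideanSpace ℝ ι) j
    - if i = j then (Fintype.card ι : ℝ)⁻¹ else 0) ∂μ

theorem secondMoment_isSymm (μ : Measure (sphere (0 : EuclideanSpace ℝ ι) 1)) :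
    (secondMoment μ).IsSymm := by
  ext i j
  simp only [secondMoment, transpose_apply, of_apply, mul_comm, eq_comm]

theorem trace_secondMoment (μ : Measure (sphere (0 : EuclideanSpace ℝ ι) 1))
    [IsFiniteMeasure μ] : (secondMoment μ).trace = 0 := by
  have htrace : ∀ m : sphere (0 : EuclideanSpace ℝ ι) 1, ∑ i,
      ((m : EuclideanSpace ℝ ι) i * (m : EuclideanSpace ℝ ι) i - (Fintype.card ι : ℝ)⁻¹) = 0 := by
    intro m
    have hsq := sum_sq_apply_of_mem_sphere m
    have hcard : (Fintype.card ι : ℝ) ≠ 0 := Nat.cast_ne_zero.mpr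
      (Finset.card_ne_zero.mpr (Finset.nonempty_of_sum_ne_zero (hsq.symm ▸ one_ne_zero)))
    simp only [Finset.sum_sub_distrib, ← sq, hsq, Finset.sum_const, Finset.card_univ, nsmul_eq_mul,
      mul_inv_cancel₀ hcard, sub_self]
  simp only [trace, diag, secondMoment, of_apply, if_pos]
  rw [← integral_finsetSum _ fun i _ => (by fun_prop : Continuous _).integrable_of_compactSpace]
  simp [htrace]

theorem dotProduct_secondMoment_mulVec (μ : Measure (sphere (0 : EuclideanSpace ℝ ι) 1))
    [IsProbabilityMeasure μ] (v : ι → ℝ) :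
    v ⬝ᵥ secondMoment μ *ᵥ v = ∫ m : sphere (0 : EuclideanSpace ℝ ι) 1,
      ⟪WithLp.toLp 2 v, (m : EuclideanSpace ℝ ι)⟫ ^ 2 ∂μ - (Fintype.card ι : ℝ)⁻¹ * (v ⬝ᵥ v) := by
  have hvec : secondMoment μ = of fun i j => ∫ m : sphere (0 : EuclideanSpace ℝ ι) 1,
      (vecMulVec (WithLp.ofLp (m : EuclideanSpace ℝ ι)) (WithLp.ofLp (m : EuclideanSpace ℝ ι))
        - (Fintype.card ι : ℝ)⁻¹ • 1) i j ∂μ := by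
    ext i j
    simp [secondMoment, vecMulVec_apply, one_apply]
  rw [hvec, dotProduct_of_integral_mulVec
    (fun i j => (by fun_prop : Continuous _).integrable_of_compactSpace)]
  simp only [dotProduct_vecMulVec_sub_smul_one_mulVec]
  rw [integral_sub (by fun_prop : Continuous _).integrable_of_compactSpace (integrable_const _),
    integral_const, probReal_univ, one_smul]
  rfl

theorem spectrum_secondMoment_subset_Icc (μ : Measure (sphere (0 : EuclideanSpace ℝ ι) 1))
    [IsProbabilityMeasure μ] :
    spectrum ℝ (secondMoment μ) ⊆
      Set.Icc (-(Fintype.card ι : ℝ)⁻¹) (1 - (Fintype.card ι : ℝ)⁻¹) := by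
  refine spectrum_subset_Icc_of_dotProduct_mulVec fun v => ?_
  have hle := integral_inner_sq_le_norm_sq (ν := μ) (WithLp.toLp 2 v)
  have hnn : 0 ≤ ∫ m : sphere (0 : EuclideanSpace ℝ ι) 1,
      ⟪WithLp.toLp 2 v, (m : EuclideanSpace ℝ ι)⟫ ^ 2 ∂μ := integral_nonneg fun _ => sq_nonneg _
  rw [norm_toLp_sq] at hle
  rw [dotProduct_secondMoment_mulVec]
  constructor <;> linarith

theorem spectrum_secondMoment_subset_Ioo (μ : Measure (sphere (0 : EuclideanSpace ℝ ι) 1))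
    [IsProbabilityMeasure μ] (hμ : μ ≪ (volume : Measure (EuclideanSpace ℝ ι)).toSphere)
    (hι : 1 < Fintype.card ι) :
    spectrum ℝ (secondMoment μ) ⊆
      Set.Ioo (-(Fintype.card ι : ℝ)⁻¹) (1 - (Fintype.card ι : ℝ)⁻¹) := by
  refine spectrum_subset_Ioo_of_dotProduct_mulVec fun v hv => ?_
  have hw : WithLp.toLp 2 v ≠ 0 := by simpa using hv
  have hpos := integral_inner_sq_pos _ hμ hw
  have hlt := integral_inner_sq_lt_norm_sq _ hμ (by rwa [finrank_euclideanSpace]) hw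
  rw [norm_toLp_sq] at hlt
  rw [dotProduct_secondMoment_mulVec]
  constructor <;> linarith

end SecondMoment

theorem integral_withDensity_ofReal {X : Type*} [MeasurableSpace X] {μ : Measure X} {f : X → ℝ}
    (hf : AEMeasurable f μ) (hf0 : 0 ≤ᵐ[μ] f) (g : X → ℝ) :
    ∫ x, g x ∂μ.withDensity (fun x => ENNReal.ofReal (f x)) = ∫ x, g x * f x ∂μ := by
  rw [integral_withDensity_eq_integral_toReal_smul₀ hf.ennreal_ofReal
    (.of_forall fun _ => ENNReal.ofReal_lt_top)]
  refine integral_congr_ae (hf0.mono fun x hx => ?_)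
  dsimp only
  rw [ENNReal.toReal_ofReal hx, smul_eq_mul, mul_comm]

theorem isProbabilityMeasure_withDensity_ofReal {X : Type*} [MeasurableSpace X] {μ : Measure X}
    {f : X → ℝ} (hf0 : 0 ≤ᵐ[μ] f) (hf1 : ∫ x, f x ∂μ = 1) :
    IsProbabilityMeasure (μ.withDensity fun x => ENNReal.ofReal (f x)) := by
  constructor
  rw [withDensity_apply _ MeasurableSet.univ, Measure.restrict_univ,
    ← ofReal_integral_eq_lintegral_ofReal (integrable_of_integral_eq_one hf1) hf0, hf1,
    ENNReal.ofReal_one]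

theorem secondMoment_eq_fin_three (μ : Measure (sphere (0 : EuclideanSpace ℝ (Fin 3)) 1)) :
    secondMoment μ = of fun i j => ∫ m : sphere (0 : EuclideanSpace ℝ (Fin 3)) 1,
      ((m : EuclideanSpace ℝ (Fin 3)) i * (m : EuclideanSpace ℝ (Fin 3)) j
        - if i = j then (1/3 : ℝ) else 0) ∂μ := by
  simp [secondMoment, one_div]

theorem second_moment_eigenvalue_constraints_general
    (f : sphere (0 : EuclideanSpace ℝ (Fin 3)) 1 → ℝ)
    (hpos : ∀ m, 0 < f m)
    (hnorm : ∫ m, f m ∂sphereSigma = 1)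
    (Q : Matrix (Fin 3) (Fin 3) ℝ)
    (hQ : Q = Matrix.of fun i j => ∫ m : sphere (0 : EuclideanSpace ℝ (Fin 3)) 1,
      ((m : EuclideanSpace ℝ (Fin 3)) i * (m : EuclideanSpace ℝ (Fin 3)) j
        - if i = j then (1/3 : ℝ) else 0) * f m ∂sphereSigma) :
    (Q.IsSymm ∧ Q.trace = 0 ∧ spectrum ℝ Q ⊆ Set.Ioo (-(1/3) : ℝ) (2/3)) ∧
    ∀ μ : Measure (sphere (0 : EuclideanSpace ℝ (Fin 3)) 1), IsProbabilityMeasure μ →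
      spectrum ℝ
        ((Matrix.of fun i j => ∫ m : sphere (0 : EuclideanSpace ℝ (Fin 3)) 1,
          ((m : EuclideanSpace ℝ (Fin 3)) i * (m : EuclideanSpace ℝ (Fin 3)) j
            - if i = j then (1/3 : ℝ) else 0) ∂μ) : Matrix (Fin 3) (Fin 3) ℝ)
        ⊆ Set.Icc (-(1/3) : ℝ) (2/3) := by
  have hf0 : 0 ≤ᵐ[sphereSigma] f := .of_forall fun m => (hpos m).le
  set ν := sphereSigma.withDensity fun m => ENNReal.ofReal (f m)
  have : IsProbabilityMeasure ν := isProbabilityMeasure_withDensity_ofReal hf0 hnorm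
  have hQν : Q = secondMoment ν := by
    rw [hQ, secondMoment_eq_fin_three]
    ext i j
    exact (integral_withDensity_ofReal
      (integrable_of_integral_eq_one hnorm).aemeasurable hf0 _).symm
  have hν : ν ≪ (volume : Measure (EuclideanSpace ℝ (Fin 3))).toSphere :=
    (withDensity_absolutelyContinuous _ _).trans Measure.smul_absolutelyContinuous
  refine ⟨⟨hQν ▸ secondMoment_isSymm ν, hQν ▸ trace_secondMoment ν, ?_⟩, fun μ _ => ?_⟩
  · convert spectrum_secondMoment_subset_Ioo ν hν (by simp) using 2 <;> norm_num
  · rw [← secondMoment_eq_fin_three]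
    convert spectrum_secondMoment_subset_Icc μ using 2 <;> norm_num

/-- The second moment Q = ⟨m⊗m − I/3⟩ of a probability density/measure on S² is a
symmetric traceless matrix; its eigenvalues lie in (−1/3, 2/3) for a continuous
positive density, and in [−1/3, 2/3] for an arbitrary probability measure. -/
theorem second_moment_eigenvalue_constraints
    (f : sphere (0 : EuclideanSpace ℝ (Fin 3)) 1 → ℝ)
    (hf : Continuous f) (hpos : ∀ m, 0 < f m)
    (hnorm : ∫ m, f m ∂sphereSigma = 1)
    (Q : Matrix (Fin 3) (Fin 3) ℝ)
    (hQ : Q = Matrix.of fun i j => ∫ m : sphere (0 : EuclideanSpace ℝ (Fin 3)) 1,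
      ((m : EuclideanSpace ℝ (Fin 3)) i * (m : EuclideanSpace ℝ (Fin 3)) j
        - if i = j then (1/3 : ℝ) else 0) * f m ∂sphereSigma) :
    (Q.IsSymm ∧ Q.trace = 0 ∧ spectrum ℝ Q ⊆ Set.Ioo (-(1/3) : ℝ) (2/3)) ∧
    ∀ μ : Measure (sphere (0 : EuclideanSpace ℝ (Fin 3)) 1), IsProbabilityMeasure μ →
      spectrum ℝ
        ((Matrix.of fun i j => ∫ m : sphere (0 : EuclideanSpace ℝ (Fin 3)) 1,
          ((m : EuclideanSpace ℝ (Fin 3)) i * (m : EuclideanSpace ℝ (Fin 3)) j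
            - if i = j then (1/3 : ℝ) else 0) ∂μ) : Matrix (Fin 3) (Fin 3) ℝ)
        ⊆ Set.Icc (-(1/3) : ℝ) (2/3) :=
  second_moment_eigenvalue_constraints_general f hpos hnorm Q hQ

end
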